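/- For y₁,…,yₙ ∈ M, the Grossman–Larson product of the letters expands as y₁ ∗ ⋯ ∗ yₙ = y₁⋯yₙ + Σ_{π ≠ 0̂} (y₁⋯yₙ)^π, where the sum is over set partitions π of {1,…,n} different from the discrete partition, with (y₁⋯yₙ)^π defined via iterated right-nested ▷-products over the blocks ordered by increasing maxima. -/

import Mathlib

open TensorProduct TensorAlgebra

variable (k M : Type*) [CommRing k] [AddCommGroup M] [Module k M]

/-- The linear map sending `x ∈ M` to the primitive element `ι x ⊗ 1 + 1 ⊗ ι x`. -/
noncomputable def primMap : M →ₗ[k] TensorAlgebra k M ⊗[k] TensorAlgebra k M :=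
  ((TensorProduct.mk k (TensorAlgebra k M) (TensorAlgebra k M)).flip 1).comp (ι k) +
    (TensorProduct.mk k (TensorAlgebra k M) (TensorAlgebra k M) 1).comp (ι k)

/-- The unshuffle coproduct on the tensor algebra: the unique algebra morphism
`Δ : T(M) → T(M) ⊗ T(M)` for which every element of `M` is primitive. -/
noncomputable def unshuffle :
    TensorAlgebra k M →ₐ[k] TensorAlgebra k M ⊗[k] TensorAlgebra k M :=
  TensorAlgebra.lift k (primMap k M)

/-- The counit of the tensor algebra: the algebra morphism killing `M`. -/
noncomputable def counit : TensorAlgebra k M →ₐ[k] k :=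
  TensorAlgebra.lift k (0 : M →ₗ[k] k)

attribute [local instance] Classical.propDecidable

/-- The Grossman–Larson product `U ∗ V := U₍₁₎ · (U₍₂₎ ▷ V)` on the tensor algebra,
as a bilinear map, built from the unshuffle coproduct and the extended product `t`. -/
noncomputable def glL {k M : Type*} [CommRing k] [AddCommGroup M] [Module k M]
    (t : TensorAlgebra k M →ₗ[k] TensorAlgebra k M →ₗ[k] TensorAlgebra k M) :
    TensorAlgebra k M →ₗ[k] TensorAlgebra k M →ₗ[k] TensorAlgebra k M :=
  (TensorProduct.lift
    ((LinearMap.lcomp k (TensorAlgebra k M →ₗ[k] TensorAlgebra k M) t).comp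
      ((LinearMap.llcomp k (TensorAlgebra k M) (TensorAlgebra k M)
        (TensorAlgebra k M)).comp (LinearMap.mul k (TensorAlgebra k M))))).comp
    (unshuffle k M).toLinearMap

/-- Right-nested magmatic product over a list:
`nest m y [b₁,…,b_ℓ] = y b₁ ▷ (y b₂ ▷ (⋯ ▷ y b_ℓ))` (and `0` on the empty list). -/
def nest {α N : Type*} [Zero N] (m : N → N → N) (y : α → N) : List α → N
  | [] => 0
  | a :: rest => if rest.isEmpty then y a else m (y a) (nest m y rest)

/-- `π` is a set partition of `{0,…,n−1}`: no empty block, and every element lies in a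
unique block. -/
def IsSetPartition {n : ℕ} (π : Finset (Finset (Fin n))) : Prop :=
  ∅ ∉ π ∧ ∀ i : Fin n, ∃! B, B ∈ π ∧ i ∈ B

/-- The factor contributed at position `i` by the partition `π`: if `i` is the maximum
of some block `B` of `π`, this is `ι(y_B)` where `y_B` is the right-nested `▷`-product
of the `y_b`, `b ∈ B`, in increasing order; otherwise it is `1`. -/
noncomputable def partFactor {k M : Type*} [CommRing k] [AddCommGroup M] [Module k M]
    (m : M →ₗ[k] M →ₗ[k] M) {n : ℕ} (y : Fin n → M)
    (π : Finset (Finset (Fin n))) (i : Fin n) : TensorAlgebra k M :=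
  if (π.filter fun B => B.max = (i : WithBot (Fin n))) = ∅ then 1
  else ∑ B ∈ π.filter (fun B => B.max = (i : WithBot (Fin n))),
    ι k (nest (fun a b => m a b) y (B.sort (· ≤ ·)))

/-- The monomial `(y₁⋯yₙ)^π = y_{B₁}⋯y_{B_{|π|}}` associated to a set partition `π`,
with blocks ordered by increasing maxima. -/
noncomputable def partTerm {k M : Type*} [CommRing k] [AddCommGroup M] [Module k M]
    (m : M →ₗ[k] M →ₗ[k] M) {n : ℕ} (y : Fin n → M)
    (π : Finset (Finset (Fin n))) : TensorAlgebra k M :=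
  (((List.finRange n).map (partFactor m y π)).prod)

/-- The discrete partition `0̂` of `{0,…,n−1}` into singletons. -/
def discretePartition (n : ℕ) : Finset (Finset (Fin n)) :=
  Finset.univ.image (fun i : Fin n => ({i} : Finset (Fin n)))

/-!
Left multiplication by a letter is `x ∗ W = x · W + x ▷ W`, because `x` is primitive for the
unshuffle coproduct, and `x ▷ ·` is a derivation of the concatenation product sending a letter
`z` to the letter `x ▷ z`. Inductively, `y₀ ∗ (y₁ ∗ ⋯ ∗ yₙ)` is then the sum over the set
partitions `π` of `{1,…,n}` of `y₀ · (y₁⋯yₙ)^π` and of the words obtained from `(y₁⋯yₙ)^π` by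
replacing one letter `y_B` by `y₀ ▷ y_B`. These are exactly the words `(y₀⋯yₙ)^σ`, `σ` a set
partition of `{0,…,n}`: each `σ` arises from exactly one `π`, by adding `0` as a singleton block
or by adding `0` to a block `B`, which keeps the maximum of `B` and puts `y₀` in front of its
right-nested product. The discrete partition contributes the word `y₁⋯yₙ` itself.
-/

theorem Finset.max_eq_coe_iff {α : Type*} [LinearOrder α] {s : Finset α} {a : α} :
    s.max = a ↔ a ∈ s ∧ ∀ b ∈ s, b ≤ a :=
  ⟨fun h => ⟨Finset.mem_of_max h, fun _ hb => Finset.le_max_of_eq hb h⟩,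
    fun ⟨ha, hle⟩ => le_antisymm
      (Finset.max_le fun b hb => WithBot.coe_le_coe.2 (hle b hb)) (Finset.le_max ha)⟩

namespace IsSetPartition

variable {n : ℕ} {π : Finset (Finset (Fin n))} {B C : Finset (Fin n)}

theorem nonempty (hπ : IsSetPartition π) (hB : B ∈ π) : B.Nonempty :=
  Finset.nonempty_iff_ne_empty.2 fun h => hπ.1 (h ▸ hB)

theorem exists_mem (hπ : IsSetPartition π) (i : Fin n) : ∃ B ∈ π, i ∈ B :=
  (hπ.2 i).exists

theorem eq_of_mem_of_mem (hπ : IsSetPartition π) (hB : B ∈ π) (hC : C ∈ π) {i : Fin n}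
    (hiB : i ∈ B) (hiC : i ∈ C) : B = C :=
  (hπ.2 i).unique ⟨hB, hiB⟩ ⟨hC, hiC⟩

theorem eq_of_max_eq (hπ : IsSetPartition π) (hB : B ∈ π) (hC : C ∈ π) {i : Fin n}
    (hBi : B.max = i) (hCi : C.max = i) : B = C :=
  hπ.eq_of_mem_of_mem hB hC (Finset.mem_of_max hBi) (Finset.mem_of_max hCi)

end IsSetPartition

theorem isSetPartition_fin_zero_iff {π : Finset (Finset (Fin 0))} :
    IsSetPartition π ↔ π = ∅ := by
  refine ⟨fun hπ => Finset.eq_empty_of_forall_notMem fun B hB => ?_, ?_⟩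
  · exact hπ.1 (Finset.eq_empty_of_isEmpty B ▸ hB)
  · rintro rfl
    exact ⟨Finset.notMem_empty _, finZeroElim⟩

theorem isSetPartition_discretePartition (n : ℕ) : IsSetPartition (discretePartition n) := by
  refine ⟨by simp [discretePartition], fun i => ⟨{i}, by simp [discretePartition], ?_⟩⟩
  rintro C ⟨hC, hiC⟩
  obtain ⟨j, -, rfl⟩ := Finset.mem_image.1 hC
  rw [Finset.mem_singleton.1 hiC]

namespace GrossmanLarson

open Finset

variable {n : ℕ}

noncomputable def setPartitions (n : ℕ) : Finset (Finset (Finset (Fin n))) :=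
  univ.filter IsSetPartition

@[simp]
theorem mem_setPartitions {π : Finset (Finset (Fin n))} :
    π ∈ setPartitions n ↔ IsSetPartition π := by
  simp [setPartitions]

theorem setPartitions_zero : setPartitions 0 = {∅} := by
  ext π
  simp [isSetPartition_fin_zero_iff]

def shift (B : Finset (Fin n)) : Finset (Fin (n + 1)) :=
  B.map (Fin.succEmb n)

def unshift (C : Finset (Fin (n + 1))) : Finset (Fin n) :=
  univ.filter fun j => j.succ ∈ C

section Shift

variable {B : Finset (Fin n)} {C : Finset (Fin (n + 1))} {j : Fin n}

@[simp]
theorem succ_mem_shift : j.succ ∈ shift B ↔ j ∈ B := by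
  simp [shift]

@[simp]
theorem zero_notMem_shift : (0 : Fin (n + 1)) ∉ shift B := by
  simp [shift, Fin.succ_ne_zero]

@[simp]
theorem mem_unshift : j ∈ unshift C ↔ j.succ ∈ C := by
  simp [unshift]

theorem shift_injective : Function.Injective (shift (n := n)) :=
  map_injective _

@[simp]
theorem shift_eq_empty : shift B = ∅ ↔ B = ∅ :=
  map_eq_empty

@[simp]
theorem unshift_shift : unshift (shift B) = B := by
  ext; simp

@[simp]
theorem unshift_insert_zero : unshift (insert 0 C) = unshift C := by
  ext; simp [Fin.succ_ne_zero]

theorem shift_unshift : shift (unshift C) = C.erase 0 := by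
  ext i
  cases i using Fin.cases <;> simp [Fin.succ_ne_zero]

theorem max_shift_eq_succ : (shift B).max = j.succ ↔ B.max = j := by
  simp [max_eq_coe_iff, shift]

theorem max_insert_zero_shift_eq_succ :
    (insert 0 (shift B)).max = j.succ ↔ B.max = j := by
  rw [max_eq_coe_iff, max_eq_coe_iff]
  simp [shift, Fin.succ_ne_zero]

theorem max_shift_ne_zero : (shift B).max ≠ (0 : Fin (n + 1)) :=
  fun h => zero_notMem_shift (mem_of_max h)

theorem max_insert_zero_shift_eq_zero :
    (insert 0 (shift B)).max = (0 : Fin (n + 1)) ↔ B = ∅ := by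
  simp [shift, eq_empty_iff_forall_notMem]

theorem sort_shift : (shift B).sort = B.sort.map Fin.succ :=
  (StrictMonoOn.map_finsetSort (Fin.succEmb n) B (Fin.strictMono_succ.strictMonoOn _)).symm

theorem sort_insert_zero_shift : (insert 0 (shift B)).sort = 0 :: B.sort.map Fin.succ := by
  rw [sort_insert _ (fun b _ => Fin.zero_le b) zero_notMem_shift, sort_shift]

end Shift

/-- The block `C`, shifted, after `0` has joined the block `B`;
`B = ∅` encodes a new block `{0}`. -/
def liftBlock (B C : Finset (Fin n)) : Finset (Fin (n + 1)) :=
  if C = B then insert 0 (shift C) else shift C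

noncomputable def joinZero (π : Finset (Finset (Fin n))) (B : Finset (Fin n)) :
    Finset (Finset (Fin (n + 1))) :=
  (insert B π).image (liftBlock B)

noncomputable def dropZero (σ : Finset (Finset (Fin (n + 1)))) : Finset (Finset (Fin n)) :=
  (σ.image unshift).erase ∅

noncomputable def zeroMates (σ : Finset (Finset (Fin (n + 1)))) : Finset (Fin n) :=
  univ.filter fun j => ∃ C ∈ σ, 0 ∈ C ∧ j.succ ∈ C

section Join

variable {π : Finset (Finset (Fin n))} {B C : Finset (Fin n)} {j : Fin n}

@[simp]
theorem zero_mem_liftBlock : 0 ∈ liftBlock B C ↔ C = B := by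
  unfold liftBlock; split_ifs <;> simp [*]

@[simp]
theorem succ_mem_liftBlock : j.succ ∈ liftBlock B C ↔ j ∈ C := by
  unfold liftBlock; split_ifs <;> simp [Fin.succ_ne_zero]

@[simp]
theorem unshift_liftBlock : unshift (liftBlock B C) = C := by
  unfold liftBlock; split_ifs <;> simp

theorem max_liftBlock_eq_succ : (liftBlock B C).max = j.succ ↔ C.max = j := by
  unfold liftBlock; split_ifs
  exacts [max_insert_zero_shift_eq_succ, max_shift_eq_succ]

theorem max_liftBlock_eq_zero : (liftBlock B C).max = (0 : Fin (n + 1)) ↔ C = B ∧ B = ∅ := by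
  unfold liftBlock; split_ifs with h
  · rw [max_insert_zero_shift_eq_zero, h, and_iff_right rfl]
  · exact iff_of_false max_shift_ne_zero fun h' => h h'.1

theorem isSetPartition_joinZero (hπ : IsSetPartition π) (hB : B ∈ insert ∅ π) :
    IsSetPartition (joinZero π B) := by
  have mem_π : ∀ C ∈ insert B π, C.Nonempty → C ∈ π := by
    intro C hC hne
    rcases mem_insert.1 hC with rfl | hC
    · exact (mem_insert.1 hB).resolve_left hne.ne_empty
    · exact hC
  refine ⟨fun h => ?_, fun i => ?_⟩
  · obtain ⟨C, hC, hCe⟩ := mem_image.1 h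
    have hCB : C ≠ B := fun h => by simpa [h] using congrArg (0 ∈ ·) hCe
    rw [liftBlock, if_neg hCB, shift_eq_empty] at hCe
    exact hπ.1 (hCe ▸ (mem_insert.1 hC).resolve_left hCB)
  cases i using Fin.cases with
  | zero =>
    refine ⟨liftBlock B B, ⟨mem_image_of_mem _ (mem_insert_self _ _), by simp⟩, ?_⟩
    rintro _ ⟨hD, h0⟩
    obtain ⟨C, -, rfl⟩ := mem_image.1 hD
    rw [zero_mem_liftBlock.1 h0]
  | succ j =>
    obtain ⟨C, hC, hjC⟩ := hπ.exists_mem j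
    refine ⟨liftBlock B C, ⟨mem_image_of_mem _ (mem_insert_of_mem hC), by simpa⟩, ?_⟩
    rintro _ ⟨hD, hjD⟩
    obtain ⟨C', hC', rfl⟩ := mem_image.1 hD
    rw [succ_mem_liftBlock] at hjD
    rw [hπ.eq_of_mem_of_mem (mem_π C' hC' ⟨j, hjD⟩) hC hjD hjC]

theorem dropZero_joinZero (hπ : ∅ ∉ π) (hB : B ∈ insert ∅ π) :
    dropZero (joinZero π B) = π := by
  rw [dropZero, joinZero, image_image]
  simp only [Function.comp_def, unshift_liftBlock, image_id']
  rcases mem_insert.1 hB with rfl | hB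
  · exact erase_insert hπ
  · rw [insert_eq_of_mem hB, erase_eq_of_notMem hπ]

end Join

section Drop

variable {σ : Finset (Finset (Fin (n + 1)))} {C D : Finset (Fin (n + 1))}

theorem exists_succ_mem (hσ : IsSetPartition σ) (hC : C ∈ σ) (h0 : 0 ∉ C) :
    ∃ j : Fin n, j.succ ∈ C := by
  obtain ⟨i, hi⟩ := hσ.nonempty hC
  cases i using Fin.cases with
  | zero => exact absurd hi h0
  | succ j => exact ⟨j, hi⟩

theorem zeroMates_eq_unshift (hσ : IsSetPartition σ) (hC : C ∈ σ) (h0 : 0 ∈ C) :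
    zeroMates σ = unshift C := by
  ext j
  simp only [zeroMates, mem_filter, mem_univ, true_and, mem_unshift]
  exact ⟨fun ⟨D, hD, h0D, hjD⟩ => hσ.eq_of_mem_of_mem hD hC h0D h0 ▸ hjD,
    fun hj => ⟨C, hC, h0, hj⟩⟩

theorem zeroMates_joinZero {π : Finset (Finset (Fin n))} {B : Finset (Fin n)}
    (hπ : IsSetPartition π) (hB : B ∈ insert ∅ π) : zeroMates (joinZero π B) = B := by
  rw [zeroMates_eq_unshift (isSetPartition_joinZero hπ hB)
    (mem_image_of_mem _ (mem_insert_self _ _)) (by simp), unshift_liftBlock]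

theorem isSetPartition_dropZero (hσ : IsSetPartition σ) : IsSetPartition (dropZero σ) := by
  refine ⟨notMem_erase _ _, fun j => ?_⟩
  obtain ⟨C, hC, hjC⟩ := hσ.exists_mem j.succ
  refine ⟨unshift C, ⟨mem_erase.2 ⟨ne_empty_of_mem (mem_unshift.2 hjC),
    mem_image_of_mem _ hC⟩, mem_unshift.2 hjC⟩, ?_⟩
  rintro _ ⟨hD, hjD⟩
  obtain ⟨C', hC', rfl⟩ := mem_image.1 (mem_of_mem_erase hD)
  rw [hσ.eq_of_mem_of_mem hC' hC (mem_unshift.1 hjD) hjC]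

theorem unshift_ne_of_ne (hσ : IsSetPartition σ) (hC : C ∈ σ) (hD : D ∈ σ) (h0 : 0 ∉ C)
    (hCD : C ≠ D) : unshift C ≠ unshift D := by
  obtain ⟨j, hj⟩ := exists_succ_mem hσ hC h0
  intro h
  have hjD : j.succ ∈ D := mem_unshift.1 (h ▸ mem_unshift.2 hj)
  exact hCD (hσ.eq_of_mem_of_mem hC hD hj hjD)

theorem zeroMates_mem_insert_dropZero (hσ : IsSetPartition σ) :
    zeroMates σ ∈ insert ∅ (dropZero σ) := by
  obtain ⟨C, hC, h0⟩ := hσ.exists_mem 0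
  rw [zeroMates_eq_unshift hσ hC h0]
  by_cases h : unshift C = ∅
  · exact h ▸ mem_insert_self _ _
  · exact mem_insert_of_mem (mem_erase.2 ⟨h, mem_image_of_mem _ hC⟩)

theorem liftBlock_unshift (hσ : IsSetPartition σ) (hC : C ∈ σ) (h0 : 0 ∈ C) (hD : D ∈ σ) :
    liftBlock (unshift C) (unshift D) = D := by
  by_cases hDC : D = C
  · rw [hDC, liftBlock, if_pos rfl, shift_unshift, insert_erase h0]
  · have h0D : 0 ∉ D := fun h => hDC (hσ.eq_of_mem_of_mem hD hC h h0)
    rw [liftBlock, if_neg (unshift_ne_of_ne hσ hD hC h0D hDC), shift_unshift,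
      erase_eq_of_notMem h0D]

theorem joinZero_dropZero (hσ : IsSetPartition σ) :
    joinZero (dropZero σ) (zeroMates σ) = σ := by
  obtain ⟨C, hC, h0⟩ := hσ.exists_mem 0
  have hblocks : insert (unshift C) (dropZero σ) = σ.image unshift := by
    by_cases he : unshift C = ∅
    · rw [dropZero, he, insert_erase (he ▸ mem_image_of_mem _ hC)]
    · rw [dropZero, insert_eq_of_mem (mem_erase.2 ⟨he, mem_image_of_mem _ hC⟩)]
      refine erase_eq_of_notMem fun hmem => ?_
      obtain ⟨D, hD, hDe⟩ := mem_image.1 hmem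
      have hDC : D ≠ C := fun h => he (h ▸ hDe)
      have h0D : 0 ∉ D := fun h => hDC (hσ.eq_of_mem_of_mem hD hC h h0)
      obtain ⟨j, hj⟩ := exists_succ_mem hσ hD h0D
      exact notMem_empty j (hDe ▸ mem_unshift.2 hj)
  rw [zeroMates_eq_unshift hσ hC h0, joinZero, hblocks, image_image]
  exact (image_congr fun D hD => liftBlock_unshift hσ hC h0 hD).trans image_id

end Drop

theorem sum_setPartitions_succ {R : Type*} [AddCommMonoid R]
    (f : Finset (Finset (Fin (n + 1))) → R) :
    ∑ σ ∈ setPartitions (n + 1), f σ =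
      ∑ π ∈ setPartitions n, ∑ B ∈ insert ∅ π, f (joinZero π B) := by
  rw [sum_sigma']
  symm
  refine sum_nbij' (fun p => joinZero p.1 p.2) (fun σ => ⟨dropZero σ, zeroMates σ⟩)
    ?_ ?_ ?_ ?_ fun _ _ => rfl
  · rintro ⟨π, B⟩ h
    simp only [mem_sigma, mem_setPartitions] at h ⊢
    exact isSetPartition_joinZero h.1 h.2
  · intro σ hσ
    simp only [mem_sigma, mem_setPartitions] at hσ ⊢
    exact ⟨isSetPartition_dropZero hσ, zeroMates_mem_insert_dropZero hσ⟩
  · rintro ⟨π, B⟩ h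
    simp only [mem_sigma, mem_setPartitions] at h
    rw [dropZero_joinZero h.1.1 h.2, zeroMates_joinZero h.1 h.2]
  · intro σ hσ
    exact joinZero_dropZero (mem_setPartitions.1 hσ)

theorem sum_filter_max_eq {R : Type*} [AddCommMonoid R] {π : Finset (Finset (Fin n))}
    (hπ : IsSetPartition π) (f : Finset (Fin n) → R) :
    ∑ j : Fin n, ∑ B ∈ π.filter (·.max = (j : WithBot (Fin n))), f B =
      ∑ B ∈ π, f B := by
  rw [← sum_fiberwise_of_maps_to (g := Finset.max) (t := univ.map Function.Embedding.coeWithBot)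
    fun B hB => ?_, sum_map]
  · rfl
  · obtain ⟨b, hb⟩ := max_of_nonempty (hπ.nonempty hB)
    simp [hb]

theorem nest_map {α β N : Type*} [Zero N] (m : N → N → N) (y : β → N) (g : α → β) :
    ∀ l : List α, nest m y (l.map g) = nest m (y ∘ g) l
  | [] => rfl
  | a :: l => by
    simp only [List.map_cons, nest, List.isEmpty_iff, List.map_eq_nil_iff, nest_map m y g l]
    rfl

theorem nest_cons_of_ne_nil {α N : Type*} [Zero N] (m : N → N → N) (y : α → N) (a : α)
    {l : List α} (hl : l ≠ []) : nest m y (a :: l) = m (y a) (nest m y l) := by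
  simp [nest, hl]

section Leibniz

variable {R A : Type*} [CommSemiring R] [Ring A] [Module R A] (D : A →ₗ[R] A)
  (hD : ∀ a b, D (a * b) = D a * b + a * D b)
include hD

theorem map_one_of_leibniz : D 1 = 0 := by
  simpa using hD 1 1

theorem map_prod_ofFn_of_leibniz {n : ℕ} (f : Fin n → A) :
    D (List.ofFn f).prod = ∑ j, (List.ofFn (Function.update f j (D (f j)))).prod := by
  induction n with
  | zero => simp [map_one_of_leibniz D hD]
  | succ n ih =>
    rw [List.ofFn_succ, List.prod_cons, hD, ih, Fin.sum_univ_succ, mul_sum]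
    congr 1
    · simp [List.ofFn_succ]
    · refine sum_congr rfl fun j _ => ?_
      rw [List.ofFn_succ, List.prod_cons, Function.update_of_ne (Fin.succ_ne_zero j).symm]
      congr 3
      exact (Function.update_comp_eq_of_injective f (Fin.succ_injective n) j _).symm

end Leibniz

theorem prod_ofFn_update_sum {A ι : Type*} [Semiring A] (f : Fin n → A) (j : Fin n)
    (s : Finset ι) (c : ι → A) :
    (List.ofFn (Function.update f j (∑ b ∈ s, c b))).prod =
      ∑ b ∈ s, (List.ofFn (Function.update f j (c b))).prod :=
  (MultilinearMap.mkPiAlgebraFin ℕ n A).map_update_sum s j c f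

section Algebra

variable {k M : Type*} [CommRing k] [AddCommGroup M] [Module k M] (m : M →ₗ[k] M →ₗ[k] M)

theorem nest_sort_shift (y : Fin (n + 1) → M) (B : Finset (Fin n)) :
    nest (fun a b => m a b) y ((shift B).sort (· ≤ ·)) =
      nest (fun a b => m a b) (fun i => y i.succ) (B.sort (· ≤ ·)) := by
  rw [sort_shift, nest_map]
  rfl

theorem nest_sort_insert_zero_shift (y : Fin (n + 1) → M) {B : Finset (Fin n)}
    (hB : B.Nonempty) :
    nest (fun a b => m a b) y ((insert 0 (shift B)).sort (· ≤ ·)) =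
      m (y 0) (nest (fun a b => m a b) (fun i => y i.succ) (B.sort (· ≤ ·))) := by
  obtain ⟨b, hb⟩ := hB
  rw [sort_insert_zero_shift,
    nest_cons_of_ne_nil _ _ _ (List.map_eq_nil_iff.not.2 (List.ne_nil_of_mem ((mem_sort _).2 hb))),
    nest_map]
  rfl

theorem partFactor_of_filter_eq_singleton {n : ℕ} (y : Fin n → M)
    {σ : Finset (Finset (Fin n))} {i : Fin n} {C : Finset (Fin n)}
    (h : σ.filter (·.max = (i : WithBot (Fin n))) = {C}) :
    partFactor m y σ i = ι k (nest (fun a b => m a b) y (C.sort (· ≤ ·))) := by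
  rw [partFactor, h, if_neg (singleton_ne_empty C), sum_singleton]

theorem partFactor_of_filter_eq_image_shift (y : Fin (n + 1) → M)
    {σ : Finset (Finset (Fin (n + 1)))} {π : Finset (Finset (Fin n))} {j : Fin n}
    (h : σ.filter (·.max = (j.succ : WithBot (Fin (n + 1)))) =
      (π.filter (·.max = (j : WithBot (Fin n)))).image shift) :
    partFactor m y σ j.succ = partFactor m (fun i => y i.succ) π j := by
  simp only [partFactor, h, image_eq_empty, sum_image fun _ _ _ _ hCD => shift_injective hCD,
    nest_sort_shift]

theorem partFactor_joinZero_zero (y : Fin (n + 1) → M) (π : Finset (Finset (Fin n)))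
    (B : Finset (Fin n)) :
    partFactor m y (joinZero π B) 0 = if B = ∅ then ι k (y 0) else 1 := by
  split_ifs with hB
  · subst hB
    rw [partFactor_of_filter_eq_singleton (C := {0}) m y, sort_singleton]
    · rfl
    have hfilter : (insert ∅ π).filter
        (fun C => (liftBlock ∅ C).max = ((0 : Fin (n + 1)) : WithBot (Fin (n + 1)))) = {∅} := by
      ext C
      rw [mem_filter, max_liftBlock_eq_zero, mem_singleton]
      exact ⟨fun h => h.2.1, fun h => ⟨h ▸ mem_insert_self _ _, h, rfl⟩⟩
    rw [joinZero, filter_image, hfilter, image_singleton]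
    simp [liftBlock, shift]
  · refine if_pos (filter_eq_empty_iff.2 fun C hC => ?_)
    obtain ⟨D, -, rfl⟩ := mem_image.1 hC
    exact fun h => hB (max_liftBlock_eq_zero.1 h).2

theorem partFactor_joinZero_succ (y : Fin (n + 1) → M) {π : Finset (Finset (Fin n))}
    (hπ : IsSetPartition π) {B : Finset (Fin n)} (hB : B ∈ insert ∅ π) (j : Fin n) :
    partFactor m y (joinZero π B) j.succ =
      if B.max = j then
        ι k (m (y 0) (nest (fun a b => m a b) (fun i => y i.succ) (B.sort (· ≤ ·))))
      else partFactor m (fun i => y i.succ) π j := by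
  have hfilter : (joinZero π B).filter (·.max = (j.succ : WithBot (Fin (n + 1)))) =
      ((insert B π).filter (·.max = (j : WithBot (Fin n)))).image (liftBlock B) := by
    rw [joinZero, filter_image]
    exact congrArg _ (filter_congr fun C _ => max_liftBlock_eq_succ)
  split_ifs with hj
  · have hBπ : B ∈ π := (mem_insert.1 hB).resolve_left fun h => by simp [h] at hj
    have hB' : (insert B π).filter (·.max = (j : WithBot (Fin n))) = {B} := by
      ext C
      simp only [mem_filter, mem_insert, mem_singleton]
      refine ⟨fun ⟨hC, hCj⟩ => hC.elim id fun hC => hπ.eq_of_max_eq hC hBπ hCj hj,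
        fun h => ⟨Or.inl h, h ▸ hj⟩⟩
    rw [partFactor_of_filter_eq_singleton m y (hfilter.trans (by rw [hB', image_singleton])),
      liftBlock, if_pos rfl, nest_sort_insert_zero_shift m y (hπ.nonempty hBπ)]
  · refine partFactor_of_filter_eq_image_shift m y (hfilter.trans ?_)
    rw [filter_insert, if_neg hj]
    refine image_congr fun C hC => if_neg fun hCB => hj ?_
    exact hCB ▸ (mem_filter.1 hC).2

theorem partTerm_joinZero (y : Fin (n + 1) → M) {π : Finset (Finset (Fin n))}
    (hπ : IsSetPartition π) {B : Finset (Fin n)} (hB : B ∈ insert ∅ π) :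
    partTerm m y (joinZero π B) = (if B = ∅ then ι k (y 0) else 1) *
      (List.ofFn fun j => if B.max = j then
        ι k (m (y 0) (nest (fun a b => m a b) (fun i => y i.succ) (B.sort (· ≤ ·))))
        else partFactor m (fun i => y i.succ) π j).prod := by
  rw [partTerm, ← List.ofFn_eq_map, List.ofFn_succ, List.prod_cons, partFactor_joinZero_zero]
  simp only [partFactor_joinZero_succ m y hπ hB]

theorem partTerm_joinZero_empty (y : Fin (n + 1) → M) {π : Finset (Finset (Fin n))}
    (hπ : IsSetPartition π) :
    partTerm m y (joinZero π ∅) = ι k (y 0) * partTerm m (fun i => y i.succ) π := by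
  rw [partTerm_joinZero m y hπ (mem_insert_self _ _), if_pos rfl, partTerm, ← List.ofFn_eq_map]
  simp only [max_empty, WithBot.bot_ne_coe, if_false]

theorem partTerm_joinZero_of_max_eq (y : Fin (n + 1) → M) {π : Finset (Finset (Fin n))}
    (hπ : IsSetPartition π) {B : Finset (Fin n)} (hB : B ∈ π) {j : Fin n} (hj : B.max = j) :
    partTerm m y (joinZero π B) =
      (List.ofFn (Function.update (partFactor m (fun i => y i.succ) π) j
        (ι k (m (y 0)
          (nest (fun a b => m a b) (fun i => y i.succ) (B.sort (· ≤ ·))))))).prod := by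
  rw [partTerm_joinZero m y hπ (mem_insert_of_mem hB), if_neg (hπ.nonempty hB).ne_empty, one_mul]
  congr 2
  ext i
  simp only [Function.update_apply, hj, WithBot.coe_inj, @eq_comm _ j]

theorem partTerm_discretePartition (y : Fin n → M) :
    partTerm m y (discretePartition n) = ((List.finRange n).map fun i => ι k (y i)).prod := by
  refine congrArg List.prod (List.map_congr_left fun i _ => ?_)
  rw [partFactor_of_filter_eq_singleton (C := {i}) m y, sort_singleton]
  · rfl
  ext C
  simp only [discretePartition, mem_filter, mem_image, mem_univ, true_and, mem_singleton]
  constructor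
  · rintro ⟨⟨a, rfl⟩, h⟩
    rw [max_singleton, WithBot.coe_inj] at h
    rw [h]
  · rintro rfl
    exact ⟨⟨i, rfl⟩, max_singleton⟩

theorem unshuffle_ι (x : M) :
    unshuffle k M (ι k x) = ι k x ⊗ₜ[k] 1 + 1 ⊗ₜ[k] ι k x := by
  simp [unshuffle, primMap]

variable (t : TensorAlgebra k M →ₗ[k] TensorAlgebra k M →ₗ[k] TensorAlgebra k M)

theorem glL_ι (hone : ∀ W, t 1 W = W) (x : M) (V : TensorAlgebra k M) :
    glL t (ι k x) V = ι k x * V + t (ι k x) V := by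
  simp [glL, unshuffle_ι, hone]

theorem apply_ι_partFactor (hbase : ∀ x y : M, t (ι k x) (ι k y) = ι k (m x y))
    (hleib : ∀ (x : M) (V W : TensorAlgebra k M),
      t (ι k x) (V * W) = t (ι k x) V * W + V * t (ι k x) W)
    (x : M) (y : Fin n → M) (π : Finset (Finset (Fin n))) (j : Fin n) :
    t (ι k x) (partFactor m y π j) = ∑ B ∈ π.filter (·.max = (j : WithBot (Fin n))),
      ι k (m x (nest (fun a b => m a b) y (B.sort (· ≤ ·)))) := by
  rw [partFactor]
  split_ifs with h
  · rw [h, sum_empty]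
    exact map_one_of_leibniz _ (hleib x)
  · simp only [map_sum, hbase]

theorem apply_ι_partTerm (hbase : ∀ x y : M, t (ι k x) (ι k y) = ι k (m x y))
    (hleib : ∀ (x : M) (V W : TensorAlgebra k M),
      t (ι k x) (V * W) = t (ι k x) V * W + V * t (ι k x) W)
    (y : Fin (n + 1) → M) {π : Finset (Finset (Fin n))} (hπ : IsSetPartition π) :
    t (ι k (y 0)) (partTerm m (fun i => y i.succ) π) =
      ∑ B ∈ π, partTerm m y (joinZero π B) := by
  rw [partTerm, ← List.ofFn_eq_map, map_prod_ofFn_of_leibniz _ (hleib _),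
    ← sum_filter_max_eq hπ]
  refine sum_congr rfl fun j _ => ?_
  rw [apply_ι_partFactor m t hbase hleib, prod_ofFn_update_sum]
  refine sum_congr rfl fun B hB => ?_
  rw [partTerm_joinZero_of_max_eq m y hπ (mem_filter.1 hB).1 (mem_filter.1 hB).2]

theorem foldr_glL_eq_sum_partTerm (hone : ∀ W, t 1 W = W)
    (hbase : ∀ x y : M, t (ι k x) (ι k y) = ι k (m x y))
    (hleib : ∀ (x : M) (V W : TensorAlgebra k M),
      t (ι k x) (V * W) = t (ι k x) V * W + V * t (ι k x) W)
    (n : ℕ) (y : Fin n → M) :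
    ((List.finRange n).map fun i => ι k (y i)).foldr (fun a b => glL t a b) 1 =
      ∑ π ∈ setPartitions n, partTerm m y π := by
  induction n with
  | zero => simp [setPartitions_zero, partTerm]
  | succ n ih =>
    rw [List.finRange_succ, List.map_cons, List.foldr_cons, List.map_map, Function.comp_def,
      ih, glL_ι t hone, mul_sum, map_sum, ← sum_add_distrib, sum_setPartitions_succ]
    refine sum_congr rfl fun π hπ => ?_
    rw [mem_setPartitions] at hπ
    rw [sum_insert hπ.1, partTerm_joinZero_empty m y hπ, apply_ι_partTerm m t hbase hleib y hπ]

end Algebra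

end GrossmanLarson

theorem glProd_letters_partition_expansion_general {k M : Type*} [CommRing k] [AddCommGroup M]
    [Module k M] (m : M →ₗ[k] M →ₗ[k] M)
    (t : TensorAlgebra k M →ₗ[k] TensorAlgebra k M →ₗ[k] TensorAlgebra k M)
    (hone : ∀ W, t 1 W = W)
    (hbase : ∀ x y : M, t (ι k x) (ι k y) = ι k (m x y))
    (hleib : ∀ (x : M) (V W : TensorAlgebra k M),
      t (ι k x) (V * W) = t (ι k x) V * W + V * t (ι k x) W) :
    ∀ (n : ℕ) (y : Fin n → M),
      (((List.finRange n).map (fun i => ι k (y i))).foldr (fun a b => glL t a b) 1) =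
        ((List.finRange n).map (fun i => ι k (y i))).prod +
          ∑ π ∈ Finset.univ.filter
              (fun π : Finset (Finset (Fin n)) =>
                IsSetPartition π ∧ π ≠ discretePartition n),
            partTerm m y π := by
  intro n y
  rw [GrossmanLarson.foldr_glL_eq_sum_partTerm m t hone hbase hleib,
    ← Finset.add_sum_erase _ _
      (GrossmanLarson.mem_setPartitions.2 (isSetPartition_discretePartition n)),
    GrossmanLarson.partTerm_discretePartition]
  congr 2
  ext π
  simp [GrossmanLarson.setPartitions, and_comm]

/-- For `y₁,…,yₙ ∈ M`, the Grossman–Larson product of the letters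
expands as `y₁ ∗ ⋯ ∗ yₙ = y₁⋯yₙ + Σ_{π ≠ 0̂} (y₁⋯yₙ)^π`, summing over all set
partitions of `{1,…,n}` different from the discrete partition `0̂`. -/
theorem glProd_letters_partition_expansion {k M : Type*} [CommRing k] [AddCommGroup M]
    [Module k M] (m : M →ₗ[k] M →ₗ[k] M)
    (t : TensorAlgebra k M →ₗ[k] TensorAlgebra k M →ₗ[k] TensorAlgebra k M)
    (hone : ∀ W, t 1 W = W)
    (hcounit : ∀ U, t U 1 = algebraMap k (TensorAlgebra k M) (counit k M U))
    (hbase : ∀ x y : M, t (ι k x) (ι k y) = ι k (m x y))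
    (hleib : ∀ (x : M) (V W : TensorAlgebra k M),
      t (ι k x) (V * W) = t (ι k x) V * W + V * t (ι k x) W)
    (hassoc : ∀ (x : M) (V W : TensorAlgebra k M),
      t (ι k x * V) W = t (ι k x) (t V W) - t (t (ι k x) V) W) :
    ∀ (n : ℕ) (y : Fin n → M),
      (((List.finRange n).map (fun i => ι k (y i))).foldr (fun a b => glL t a b) 1) =
        ((List.finRange n).map (fun i => ι k (y i))).prod +
          ∑ π ∈ Finset.univ.filter
              (fun π : Finset (Finset (Fin n)) =>
                IsSetPartition π ∧ π ≠ discretePartition n),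
            partTerm m y π :=
  glProd_letters_partition_expansion_general m t hone hbase hleib
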